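/- arXiv:1603.02433 — 8 statements merged into one kernel-verified Lean document; each statement's English description precedes it below -/
import Mathlib

section
/- For all integers n and k with n > k ≥ 1, the k-tuple restrained domination number of the complete graph K_n equals n if n ≤ 2k, and equals k if n ≥ 2k + 1. -/
/-- `S` is a `k`-tuple restrained dominating set of `G`: every vertex has at least `k`
vertices of `S` in its closed neighborhood, and every vertex outside `S` has at least
`k` neighbors outside `S`. -/
def SimpleGraph.IsKRDS {V : Type*} (G : SimpleGraph V) (k : ℕ) (S : Set V) : Prop :=
  (∀ x : V, k ≤ ((insert x (G.neighborSet x)) ∩ S).ncard) ∧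
  ∀ x : V, x ∉ S → k ≤ (G.neighborSet x \ S).ncard

/-- The `k`-tuple restrained domination number of `G`. -/
noncomputable def SimpleGraph.kRDNum {V : Type*} [Fintype V] (G : SimpleGraph V) (k : ℕ) : ℕ :=
  sInf {m | ∃ S : Set V, G.IsKRDS k S ∧ S.ncard = m}

/-!
In `Kₙ` the closed neighborhood of every vertex is the whole vertex set, so `S` is a `k`-tuple
restrained dominating set iff `|S| ≥ k` and, when `S` is proper, `|Sᶜ| ≥ k + 1` (a vertex outside
`S` sees all of `Sᶜ` but itself). If `n ≤ 2k` no proper set meets both bounds, so only `S = V`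
remains; if `n ≥ 2k + 1` any `k` vertices do.
-/

open Set

namespace SimpleGraph

variable {V : Type*}

theorem isKRDS_top_iff [Finite V] [Nonempty V] {k : ℕ} {S : Set V} :
    (⊤ : SimpleGraph V).IsKRDS k S ↔ k ≤ S.ncard ∧ (S ≠ univ → k < Sᶜ.ncard) := by
  have hdiff (x : V) : {x}ᶜ \ S = Sᶜ \ {x} := by
    rw [sdiff_eq, sdiff_eq, inter_comm]
  simp only [IsKRDS, neighborSet_top, insert_eq, union_compl_self, univ_inter, hdiff,
    forall_const, ← nonempty_compl]
  refine and_congr_right fun _ => ⟨fun h ⟨x, hx⟩ => ?_, fun h x hx => ?_⟩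
  all_goals
    have hpos : 0 < Sᶜ.ncard := (ncard_pos).2 ⟨x, hx⟩
    have := ncard_sdiff_singleton_of_mem (s := Sᶜ) hx
  · have := h x hx
    omega
  · have := h ⟨x, hx⟩
    omega

theorem kRDNum_eq_of_isKRDS [Fintype V] {G : SimpleGraph V} {k : ℕ} {S : Set V}
    (hS : G.IsKRDS k S) (hmin : ∀ T, G.IsKRDS k T → S.ncard ≤ T.ncard) :
    G.kRDNum k = S.ncard :=
  IsLeast.csInf_eq ⟨⟨S, hS, rfl⟩, by rintro _ ⟨T, hT, rfl⟩; exact hmin T hT⟩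

variable [Fintype V] {k : ℕ}

theorem kRDNum_top_of_le_two_mul [Nonempty V] (hk : k ≤ Fintype.card V) (hV : Fintype.card V ≤ 2 * k) :
    (⊤ : SimpleGraph V).kRDNum k = Fintype.card V := by
  have huniv : (⊤ : SimpleGraph V).IsKRDS k univ :=
    isKRDS_top_iff.2 ⟨by simpa using hk, fun h => absurd rfl h⟩
  have heq_univ (T : Set V) (hT : (⊤ : SimpleGraph V).IsKRDS k T) : T = univ := by
    obtain ⟨hT, hTc⟩ := isKRDS_top_iff.1 hT
    by_contra hne
    have := hTc hne
    have := ncard_add_ncard_compl T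
    rw [Nat.card_eq_fintype_card] at this
    omega
  simpa using kRDNum_eq_of_isKRDS huniv fun T hT => by rw [heq_univ T hT]

theorem kRDNum_top_of_two_mul_lt (hV : 2 * k < Fintype.card V) :
    (⊤ : SimpleGraph V).kRDNum k = k := by
  have : Nonempty V := Fintype.card_pos_iff.1 (by omega)
  obtain ⟨S, -, hS⟩ := exists_subset_card_eq (s := (univ : Set V)) (n := k) (by simp; omega)
  have hSc : Sᶜ.ncard = Fintype.card V - k := by
    rw [← hS, ncard_compl, Nat.card_eq_fintype_card]
  have hKRDS : (⊤ : SimpleGraph V).IsKRDS k S := isKRDS_top_iff.2 ⟨hS.ge, fun _ => by omega⟩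
  rw [kRDNum_eq_of_isKRDS hKRDS fun T hT => hS ▸ (isKRDS_top_iff.1 hT).1, hS]

end SimpleGraph

theorem kRDNum_completeGraph_general (n k : ℕ) (hn : k < n) :
    (n ≤ 2 * k → (⊤ : SimpleGraph (Fin n)).kRDNum k = n) ∧
    (2 * k + 1 ≤ n → (⊤ : SimpleGraph (Fin n)).kRDNum k = k) := by
  have : NeZero n := ⟨by omega⟩
  refine ⟨fun hle => ?_, fun hge => ?_⟩
  · simpa using SimpleGraph.kRDNum_top_of_le_two_mul (V := Fin n) (by simpa using hn.le)
      (by simpa using hle)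
  · exact SimpleGraph.kRDNum_top_of_two_mul_lt (by simpa using hge)

/-- For all integers n > k ≥ 1, the k-tuple restrained domination number of K_n equals
n if n ≤ 2k, and equals k if n ≥ 2k + 1. -/
theorem kRDNum_completeGraph (n k : ℕ) (hk : 1 ≤ k) (hn : k < n) :
    (n ≤ 2 * k → (⊤ : SimpleGraph (Fin n)).kRDNum k = n) ∧
    (2 * k + 1 ≤ n → (⊤ : SimpleGraph (Fin n)).kRDNum k = k) :=
  kRDNum_completeGraph_general n k hn
end

section
/- For every integer n ≥ 3, the restrained domination number of the cycle C_n equals ⌈n/3⌉ + 1 if n ≡ 2 (mod 3), and equals ⌈n/3⌉ otherwise. -/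
/-!
On the cycle `C_N` (`N ≥ 2`), a set `S` is restrained dominating iff every three consecutive
vertices meet `S` and no vertex outside `S` has both neighbours in `S`. The first condition
gives `N ≤ 3 |S|`. By the second, the vertices outside `S` split into adjacent pairs
`{x, x + 1}` (a third consecutive one would be undominated), so `N - |S|` is even. For
`N ≡ 2 (mod 3)` these two constraints exclude `|S| = ⌈N/3⌉`. Conversely every third vertex,
together with the last vertex when `N ≡ 2 (mod 3)`, is a restrained dominating set of the
required size.
-/

namespace SimpleGraph

variable {V : Type*}

theorem kRDNum_eq_of_forall_le [Fintype V] {G : SimpleGraph V} {k m : ℕ} {S : Set V}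
    (hS : G.IsKRDS k S) (hSm : S.ncard ≤ m) (hle : ∀ T, G.IsKRDS k T → m ≤ T.ncard) :
    G.kRDNum k = m := by
  unfold kRDNum
  refine le_antisymm (le_trans (Nat.sInf_le ⟨S, hS, rfl⟩) hSm)
    (le_csInf ⟨S.ncard, S, hS, rfl⟩ ?_)
  rintro _ ⟨T, hT, rfl⟩
  exact hle T hT

theorem isKRDS_one_iff [Finite V] {G : SimpleGraph V} {S : Set V} :
    G.IsKRDS 1 S ↔ (∀ x, (insert x (G.neighborSet x) ∩ S).Nonempty) ∧
      ∀ x ∉ S, (G.neighborSet x \ S).Nonempty := by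
  have one_le_ncard_iff (s : Set V) : 1 ≤ s.ncard ↔ s.Nonempty := Set.ncard_pos s.toFinite
  simp only [IsKRDS, one_le_ncard_iff]

end SimpleGraph

namespace Set

variable {G : Type*} [AddGroup G] [Finite G] {S : Set G} {d : G}

theorem nat_card_le_three_mul_ncard (hS : ∀ x, x ∈ S ∨ x - d ∈ S ∨ x + d ∈ S) :
    Nat.card G ≤ 3 * S.ncard := by
  have cover : univ ⊆ S ∪ (· + d) '' S ∪ (· - d) '' S := by
    intro x _
    rcases hS x with hx | hx | hx
    · exact Or.inl (Or.inl hx)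
    · exact Or.inl (Or.inr ⟨x - d, hx, sub_add_cancel x d⟩)
    · exact Or.inr ⟨x + d, hx, add_sub_cancel_right x d⟩
  calc Nat.card G = (univ : Set G).ncard := (ncard_univ G).symm
    _ ≤ (S ∪ (· + d) '' S ∪ (· - d) '' S).ncard := ncard_le_ncard cover
    _ ≤ S.ncard + ((· + d) '' S).ncard + ((· - d) '' S).ncard :=
      (ncard_union_le _ _).trans (Nat.add_le_add_right (ncard_union_le _ _) _)
    _ = 3 * S.ncard := by
      rw [ncard_image_of_injective _ (add_left_injective d),
        ncard_image_of_injective _ (sub_left_injective (b := d))]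
      ring

theorem even_ncard_compl (hS : ∀ x, x ∈ S ∨ x - d ∈ S ∨ x + d ∈ S)
    (hSc : ∀ x ∉ S, x - d ∉ S ∨ x + d ∉ S) : Even Sᶜ.ncard := by
  set A : Set G := {x | x ∉ S ∧ x + d ∉ S}
  have hdisj : Disjoint A ((· + d) '' A) := by
    rw [disjoint_left]
    rintro _ ⟨hx, hxd⟩ ⟨y, ⟨hy, -⟩, rfl⟩
    rcases hS (y + d) with h | h | h
    · exact hx h
    · exact hy (by simpa using h)
    · exact hxd h
  have hunion : A ∪ (· + d) '' A = Sᶜ := by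
    ext x
    constructor
    · rintro (⟨hx, -⟩ | ⟨y, ⟨-, hyd⟩, rfl⟩)
      exacts [hx, hyd]
    · intro hx
      by_cases hxd : x + d ∈ S
      · have hx' : x - d ∉ S := (hSc x hx).resolve_right (not_not.mpr hxd)
        exact Or.inr ⟨x - d, ⟨hx', by simpa using hx⟩, sub_add_cancel x d⟩
      · exact Or.inl ⟨hx, hxd⟩
  rw [← hunion, ncard_union_eq hdisj,
    ncard_image_of_injective _ (add_left_injective d)]
  exact ⟨_, rfl⟩

end Set

theorem Fin.ncard_setOf_val_eq_count (p : ℕ → Prop) [DecidablePred p] (N : ℕ) :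
    {x : Fin N | p x}.ncard = Nat.count p N := by
  rw [Nat.count_eq_card_filter_range, ← Set.ncard_coe_finset,
    ← Set.ncard_image_of_injective _ Fin.val_injective]
  congr 1
  ext k
  simp [Fin.exists_iff, and_comm]

theorem Fin.ncard_setOf_val_mod_three_eq_zero (N : ℕ) :
    {x : Fin N | x.val % 3 = 0}.ncard = (N + 2) / 3 := by
  have h := Fin.ncard_setOf_val_eq_count (· ≡ 0 [MOD 3]) N
  rw [Nat.count_modEq_card N three_pos] at h
  have : N / 3 + (if 0 % 3 < N % 3 then 1 else 0) = (N + 2) / 3 := by split_ifs <;> omega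
  exact h.trans this

theorem Rat.ceil_natCast_div_three (N : ℕ) : ⌈(N : ℚ) / 3⌉ = ((N + 2) / 3 : ℕ) := by
  have h := Rat.ceil_natCast_div_natCast N 3
  push_cast at h ⊢
  omega

namespace SimpleGraph

open Fin.CommRing

theorem isKRDS_one_cycleGraph_iff {n : ℕ} {S : Set (Fin (n + 2))} :
    (cycleGraph (n + 2)).IsKRDS 1 S ↔
      (∀ x, x ∈ S ∨ x - 1 ∈ S ∨ x + 1 ∈ S) ∧ ∀ x ∉ S, x - 1 ∉ S ∨ x + 1 ∉ S := by
  simp only [isKRDS_one_iff, Set.Nonempty, cycleGraph_neighborSet, Set.mem_inter_iff,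
    Set.mem_insert_iff, Set.mem_singleton_iff, or_and_right, exists_or, existsAndEq, true_and,
    Set.mem_sdiff]

theorem le_ncard_of_isKRDS_one_cycleGraph {n : ℕ} {S : Set (Fin (n + 2))}
    (hS : (cycleGraph (n + 2)).IsKRDS 1 S) :
    (n + 2 + 2) / 3 + (if (n + 2) % 3 = 2 then 1 else 0) ≤ S.ncard := by
  obtain ⟨hdom, hres⟩ := isKRDS_one_cycleGraph_iff.mp hS
  have hthree : n + 2 ≤ 3 * S.ncard := by simpa using Set.nat_card_le_three_mul_ncard hdom
  obtain ⟨k, hk⟩ : Even Sᶜ.ncard := Set.even_ncard_compl hdom hres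
  have hsum : S.ncard + Sᶜ.ncard = n + 2 := by simpa using Set.ncard_add_ncard_compl S
  split_ifs <;> omega

/-- When `N ≡ 2 (mod 3)` the last vertex is added because it would otherwise lie outside the set
with both neighbours inside it. -/
def cycleGraphRDS (N : ℕ) : Set (Fin N) :=
  {x | x.val % 3 = 0 ∨ (N % 3 = 2 ∧ x.val = N - 1)}

theorem isKRDS_one_cycleGraphRDS (n : ℕ) :
    (cycleGraph (n + 2)).IsKRDS 1 (cycleGraphRDS (n + 2)) := by
  rw [isKRDS_one_cycleGraph_iff]
  simp only [cycleGraphRDS, Set.mem_ofPred_eq, Fin.val_add_one, Fin.coe_sub_one, Fin.ext_iff,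
    Fin.val_last, Fin.val_zero]
  refine ⟨fun x => ?_, fun x => ?_⟩ <;> have := x.isLt <;> split_ifs <;> omega

theorem ncard_cycleGraphRDS_le (N : ℕ) :
    (cycleGraphRDS N).ncard ≤ (N + 2) / 3 + if N % 3 = 2 then 1 else 0 := by
  have hlast : {x : Fin N | N % 3 = 2 ∧ x.val = N - 1}.ncard ≤ if N % 3 = 2 then 1 else 0 := by
    split_ifs with h
    · exact Set.ncard_le_one_iff_subsingleton.mpr fun _ ha _ hb => Fin.ext (ha.2.trans hb.2.symm)
    · simp [h]
  calc (cycleGraphRDS N).ncard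
      ≤ {x : Fin N | x.val % 3 = 0}.ncard + {x : Fin N | N % 3 = 2 ∧ x.val = N - 1}.ncard :=
        Set.ncard_union_le _ _
    _ ≤ _ := by rw [Fin.ncard_setOf_val_mod_three_eq_zero]; omega

theorem kRDNum_one_cycleGraph (n : ℕ) :
    (cycleGraph (n + 2)).kRDNum 1 = (n + 2 + 2) / 3 + if (n + 2) % 3 = 2 then 1 else 0 :=
  kRDNum_eq_of_forall_le (isKRDS_one_cycleGraphRDS n) (ncard_cycleGraphRDS_le _)
    fun _ => le_ncard_of_isKRDS_one_cycleGraph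

end SimpleGraph

/-- For every n ≥ 3, the restrained domination number of the cycle C_n equals
⌈n/3⌉ + 1 if n ≡ 2 (mod 3), and ⌈n/3⌉ otherwise. -/
theorem rDNum_cycleGraph (n : ℕ) (hn : 3 ≤ n) :
    ((SimpleGraph.cycleGraph n).kRDNum 1 : ℤ) =
      if n % 3 = 2 then ⌈(n : ℚ) / 3⌉ + 1 else ⌈(n : ℚ) / 3⌉ := by
  obtain ⟨m, rfl⟩ : ∃ m, n = m + 2 := ⟨n - 2, by omega⟩
  rw [SimpleGraph.kRDNum_one_cycleGraph, Rat.ceil_natCast_div_three]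
  split_ifs <;> push_cast <;> omega
end

section
/- For every integer n ≥ 4, the restrained domination number of the complement of the cycle C_n equals 4 if n = 4, equals 3 if n = 5, and equals 2 if n ≥ 6. -/
/-!
For `n ≥ 6` the vertices `0` and `3` already dominate the complement of `C_n`, and every vertex
there has `n - 3 ≥ 3` neighbours, so one of them lies outside `{0, 3}`; no single vertex can
dominate, since it would have to be isolated in `C_n`. The cases `n = 4` (two disjoint edges,
whose only restrained dominating set is everything) and `n = 5` (again a `5`-cycle) are
finite checks.
-/

namespace SimpleGraph

variable {V : Type*} {G : SimpleGraph V}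

def IsRestrainedDominatingSet (G : SimpleGraph V) (S : Set V) : Prop :=
  (∀ x, x ∈ S ∨ ∃ y ∈ S, G.Adj x y) ∧ ∀ x ∉ S, ∃ y ∉ S, G.Adj x y

instance [Fintype V] [DecidableEq V] [DecidableRel G.Adj] (S : Finset V) :
    Decidable (G.IsRestrainedDominatingSet S) := by
  unfold IsRestrainedDominatingSet; infer_instance

theorem isKRDS_one_iff_s3 [Finite V] {S : Set V} :
    G.IsKRDS 1 S ↔ G.IsRestrainedDominatingSet S := by
  have one_le_ncard : ∀ s : Set V, 1 ≤ s.ncard ↔ s.Nonempty := fun s => Set.ncard_pos s.toFinite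
  simp only [IsKRDS, IsRestrainedDominatingSet, one_le_ncard, Set.Nonempty, Set.mem_inter_iff,
    Set.mem_insert_iff, mem_neighborSet, Set.mem_sdiff]
  constructor
  · rintro ⟨hdom, hres⟩
    refine ⟨fun x => ?_, fun x hx => ?_⟩
    · obtain ⟨y, rfl | hxy, hy⟩ := hdom x
      exacts [Or.inl hy, Or.inr ⟨y, hy, hxy⟩]
    · obtain ⟨y, hxy, hy⟩ := hres x hx
      exact ⟨y, hy, hxy⟩
  · rintro ⟨hdom, hres⟩
    refine ⟨fun x => ?_, fun x hx => ?_⟩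
    · rcases hdom x with hx | ⟨y, hy, hxy⟩
      exacts [⟨x, Or.inl rfl, hx⟩, ⟨y, Or.inr hxy, hy⟩]
    · obtain ⟨y, hy, hxy⟩ := hres x hx
      exact ⟨y, hxy, hy⟩

theorem kRDNum_one_eq_card [Fintype V] {S : Finset V}
    (hS : G.IsRestrainedDominatingSet S)
    (hmin : ∀ T : Finset V, G.IsRestrainedDominatingSet T → S.card ≤ T.card) :
    G.kRDNum 1 = S.card := by
  refine le_antisymm (Nat.sInf_le ⟨S, isKRDS_one_iff_s3.2 hS, Set.ncard_coe_finset S⟩) ?_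
  refine le_csInf ⟨_, S, isKRDS_one_iff_s3.2 hS, rfl⟩ ?_
  rintro _ ⟨T, hT, rfl⟩
  lift T to Finset V using T.toFinite
  rw [Set.ncard_coe_finset]
  exact hmin T (isKRDS_one_iff_s3.1 hT)

theorem exists_adj_notMem_of_card_lt_degree {x : V} [Fintype (G.neighborSet x)] {S : Finset V}
    (h : S.card < G.degree x) : ∃ y ∉ S, G.Adj x y := by
  by_contra! hS
  have : G.neighborFinset x ⊆ S := fun y hy => by
    by_contra hyS
    exact hS y hyS ((mem_neighborFinset G x y).1 hy)
  exact (Finset.card_le_card this).not_gt (by rwa [card_neighborFinset_eq_degree])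

theorem two_le_card_of_isRestrainedDominatingSet_compl [Nonempty V] {H : SimpleGraph V}
    (hH : ∀ v, ∃ w, H.Adj v w) {S : Finset V} (hS : Hᶜ.IsRestrainedDominatingSet S) :
    2 ≤ S.card := by
  by_contra! hcard
  obtain ⟨a, hSa⟩ := Finset.card_le_one_iff_subset_singleton.1 (Nat.le_of_lt_succ hcard)
  obtain ⟨w, haw⟩ := hH a
  rcases hS.1 w with hw | ⟨y, hy, hwy⟩
  · exact haw.ne (Finset.mem_singleton.1 (hSa hw)).symm
  · rw [Finset.mem_singleton.1 (hSa hy)] at hwy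
    exact hwy.2 haw.symm

theorem cycleGraph_adj_iff_val {n : ℕ} (hn : 2 ≤ n) {u v : Fin n} :
    (cycleGraph n).Adj u v ↔
      u.val + 1 = v.val ∨ v.val + 1 = u.val ∨ u.val = 0 ∧ v.val + 1 = n ∨
        v.val = 0 ∧ u.val + 1 = n := by
  have key : ∀ a b : Fin n, (a - b).val = 1 ↔ b.val + 1 = a.val ∨ a.val = 0 ∧ b.val + 1 = n := by
    intro a b
    rcases le_or_gt b a with hba | hab
    · rw [Fin.coe_sub_iff_le.2 hba]
      have := Fin.le_def.1 hba
      omega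
    · rw [Fin.coe_sub_iff_lt.2 hab]
      have := Fin.lt_def.1 hab
      omega
  rw [cycleGraph_adj', key, key]
  tauto

theorem cycleGraph_exists_adj {n : ℕ} (hn : 2 ≤ n) (v : Fin n) : ∃ w, (cycleGraph n).Adj v w := by
  obtain ⟨m, rfl⟩ := Nat.exists_eq_add_of_le' hn
  exact ⟨v + 1, by simp [cycleGraph_adj]⟩

theorem degree_compl_cycleGraph {n : ℕ} (hn : 3 ≤ n) (v : Fin n) :
    (cycleGraph n)ᶜ.degree v = n - 3 := by
  obtain ⟨m, rfl⟩ := Nat.exists_eq_add_of_le' hn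
  rw [degree_compl, Fintype.card_fin, cycleGraph_degree_three_le]
  omega

theorem isRestrainedDominatingSet_compl_cycleGraph {n : ℕ} (hn : 6 ≤ n) :
    (cycleGraph n)ᶜ.IsRestrainedDominatingSet
      ({⟨0, by omega⟩, ⟨3, by omega⟩} : Finset (Fin n)) := by
  refine ⟨fun x => Or.inr ?_, fun x _ => exists_adj_notMem_of_card_lt_degree ?_⟩
  · have hx := x.is_lt
    by_cases hx0 : x.val + 1 = n ∨ x.val ≤ 1
    · refine ⟨⟨3, by omega⟩, by simp, ?_⟩
      simp only [compl_adj, cycleGraph_adj_iff_val (by omega : 2 ≤ n), Ne, Fin.ext_iff]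
      omega
    · refine ⟨⟨0, by omega⟩, by simp, ?_⟩
      simp only [compl_adj, cycleGraph_adj_iff_val (by omega : 2 ≤ n), Ne, Fin.ext_iff]
      omega
  · rw [degree_compl_cycleGraph (by omega), Finset.card_pair (by simp)]
    omega

end SimpleGraph

open SimpleGraph

/-- For every n ≥ 4, the restrained domination number of the complement of the cycle
C_n equals 4 if n = 4, equals 3 if n = 5, and equals 2 if n ≥ 6. -/
theorem rDNum_compl_cycleGraph (n : ℕ) (hn : 4 ≤ n) :
    ((SimpleGraph.cycleGraph n)ᶜ).kRDNum 1 =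
      if n = 4 then 4 else if n = 5 then 3 else 2 := by
  obtain rfl | rfl | hn6 : n = 4 ∨ n = 5 ∨ 6 ≤ n := by omega
  · exact kRDNum_one_eq_card (S := Finset.univ) (by decide) (by decide)
  · exact kRDNum_one_eq_card (S := {0, 2, 4}) (by decide) (by decide)
  · have : Nonempty (Fin n) := ⟨⟨0, by omega⟩⟩
    have hcard : ({⟨0, by omega⟩, ⟨3, by omega⟩} : Finset (Fin n)).card = 2 :=
      Finset.card_pair (by simp)
    rw [if_neg (by omega), if_neg (by omega), ← hcard]
    refine kRDNum_one_eq_card (isRestrainedDominatingSet_compl_cycleGraph hn6) fun T hT => ?_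
    rw [hcard]
    exact two_le_card_of_isRestrainedDominatingSet_compl (cycleGraph_exists_adj (by omega)) hT
end

section
/- Let k ≥ 1 and p ≥ 3 be integers and let G be a complete p-partite graph with minimum degree δ(G) ≥ k − 1. Then γ×k^r(G) ≥ ⌈p(k−1)/(p−1)⌉. -/
/-!
Let `S` be a minimum `k`-tuple restrained dominating set and `V₁, …, V_p` the parts.
A vertex `x ∈ Vᵢ` sees no vertex of `Vᵢ` other than itself, so `k ≤ |N[x] ∩ S| ≤ 1 + |S \ Vᵢ|`.
Summing over the `p` parts counts every vertex of `S` exactly `p - 1` times, whence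
`p (k - 1) ≤ (p - 1) |S|`.
-/

open Finset

namespace SimpleGraph

variable {V ι : Type*} {G : SimpleGraph V}

theorem isKRDS_univ [Finite V] {k : ℕ} (hdeg : ∀ v, k - 1 ≤ (G.neighborSet v).ncard) :
    G.IsKRDS k Set.univ := by
  refine ⟨fun x => ?_, fun x hx => absurd (Set.mem_univ x) hx⟩
  rw [Set.inter_univ, Set.ncard_insert_of_notMem G.notMem_neighborSet_self]
  have := hdeg x
  omega

theorem exists_isKRDS_ncard_eq_kRDNum [Fintype V] {k : ℕ} {S₀ : Set V} (h : G.IsKRDS k S₀) :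
    ∃ S, G.IsKRDS k S ∧ S.ncard = G.kRDNum k :=
  Nat.sInf_mem (s := {m | ∃ S : Set V, G.IsKRDS k S ∧ S.ncard = m}) ⟨_, S₀, h, rfl⟩

theorem Coloring.ncard_insert_neighborSet_inter_le [DecidableEq ι] (C : G.Coloring ι)
    (s : Finset V) (x : V) :
    (insert x (G.neighborSet x) ∩ ↑s).ncard ≤ #{v ∈ s | C v ≠ C x} + 1 := by
  have hsub : insert x (G.neighborSet x) ∩ ↑s ⊆ insert x ↑{v ∈ s | C v ≠ C x} := by
    rintro y ⟨rfl | hxy, hys⟩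
    · exact Set.mem_insert _ _
    · exact Set.mem_insert_of_mem _ (mem_coe.2 (mem_filter.2 ⟨hys, (C.valid hxy).symm⟩))
  calc (insert x (G.neighborSet x) ∩ ↑s).ncard
      ≤ (insert x (↑{v ∈ s | C v ≠ C x} : Set V)).ncard :=
        Set.ncard_le_ncard hsub (Set.toFinite _)
    _ ≤ #{v ∈ s | C v ≠ C x} + 1 := by
      grw [Set.ncard_insert_le, Set.ncard_coe_finset]

theorem _root_.Finset.sum_card_filter_ne [Fintype ι] [DecidableEq ι] {α : Type*} (s : Finset α)
    (f : α → ι) : ∑ i, #{a ∈ s | f a ≠ i} = (Fintype.card ι - 1) * #s := by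
  simp only [card_filter]
  rw [sum_comm, mul_comm]
  refine sum_const_nat fun a _ => ?_
  rw [← card_filter, filter_ne, card_erase_of_mem (mem_univ _), card_univ]

theorem Coloring.card_mul_le_of_forall_le_ncard [Fintype ι] [DecidableEq ι] (C : G.Coloring ι)
    (hC : Function.Surjective C) {k : ℕ} (s : Finset V)
    (hs : ∀ x, k ≤ (insert x (G.neighborSet x) ∩ ↑s).ncard) :
    Fintype.card ι * (k - 1) ≤ (Fintype.card ι - 1) * #s := by
  have hpart (i : ι) : k - 1 ≤ #{v ∈ s | C v ≠ i} := by
    obtain ⟨x, rfl⟩ := hC i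
    have := (hs x).trans (C.ncard_insert_neighborSet_inter_le s x)
    omega
  calc Fintype.card ι * (k - 1) = ∑ _i : ι, (k - 1) := by simp
    _ ≤ ∑ i, #{v ∈ s | C v ≠ i} := sum_le_sum fun i _ => hpart i
    _ = (Fintype.card ι - 1) * #s := sum_card_filter_ne s C

end SimpleGraph

theorem kRDNum_complete_multipartite_general {V : Type*} [Fintype V] (G : SimpleGraph V)
    (k p : ℕ) (hp : 3 ≤ p)
    (hdeg : ∀ v : V, k - 1 ≤ (G.neighborSet v).ncard)
    (hpart : ∃ f : V → Fin p, Function.Surjective f ∧ ∀ u v : V, G.Adj u v ↔ f u ≠ f v) :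
    ⌈((p : ℚ) * ((k : ℚ) - 1)) / ((p : ℚ) - 1)⌉ ≤ (G.kRDNum k : ℤ) := by
  classical
  obtain ⟨f, hf, hadj⟩ := hpart
  let C : G.Coloring (Fin p) := SimpleGraph.Coloring.mk f fun h => (hadj _ _).1 h
  obtain ⟨S, hS, hcard⟩ := SimpleGraph.exists_isKRDS_ncard_eq_kRDNum (SimpleGraph.isKRDS_univ hdeg)
  have hbound := C.card_mul_le_of_forall_le_ncard hf S.toFinset (by simpa using hS.1)
  rw [Fintype.card_fin, ← Set.ncard_eq_toFinset_card', hcard] at hbound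
  have hp1 : (0 : ℚ) < p - 1 := by
    have : (3 : ℚ) ≤ p := by exact_mod_cast hp
    linarith
  have hcast : (p : ℚ) * ((k - 1 : ℕ) : ℚ) ≤ ((p : ℚ) - 1) * G.kRDNum k := by
    rw [← Nat.cast_pred (by omega)]
    exact_mod_cast hbound
  have hk : (k : ℚ) - 1 ≤ ((k - 1 : ℕ) : ℚ) := by cases k <;> simp
  rw [Int.ceil_le, div_le_iff₀ hp1, Int.cast_natCast, mul_comm _ ((p : ℚ) - 1)]
  exact (mul_le_mul_of_nonneg_left hk p.cast_nonneg).trans hcast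

/-- For a complete p-partite graph G (p ≥ 3) with δ(G) ≥ k − 1,
γ×k^r(G) ≥ ⌈p(k−1)/(p−1)⌉. -/
theorem kRDNum_complete_multipartite {V : Type*} [Fintype V] (G : SimpleGraph V)
    (k p : ℕ) (hk : 1 ≤ k) (hp : 3 ≤ p)
    (hdeg : ∀ v : V, k - 1 ≤ (G.neighborSet v).ncard)
    (hpart : ∃ f : V → Fin p, Function.Surjective f ∧ ∀ u v : V, G.Adj u v ↔ f u ≠ f v) :
    ⌈((p : ℚ) * ((k : ℚ) - 1)) / ((p : ℚ) - 1)⌉ ≤ (G.kRDNum k : ℤ) :=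
  kRDNum_complete_multipartite_general G k p hp hdeg hpart
end

section
/- Let k ≥ 1 be an integer and let G be a graph with minimum degree δ(G) ≥ k − 1. Then γ×k^r(G) = k if and only if either G is the complete graph K_k, or there is a set S of k vertices of G such that S induces a complete subgraph, every vertex of V(G) − S is adjacent to every vertex of S, and the subgraph induced by V(G) − S has minimum degree at least k. -/
/-! A `k`-tuple restrained dominating set has at least `k` elements, since it meets every closed
neighborhood in `k` vertices. One of exactly `k` elements therefore lies inside every closed
neighborhood: it is a `k`-clique joined to all other vertices, and the restraint condition says that
the rest of the graph has minimum degree at least `k`. The complete graph `K_k` is the case where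
this clique is the whole vertex set. -/

theorem Set.ncard_le_ncard_inter_iff {α : Type*} {s t : Set α} (hs : s.Finite) :
    s.ncard ≤ (t ∩ s).ncard ↔ s ⊆ t := by
  refine ⟨fun h => ?_, fun h => by rw [Set.inter_eq_right.2 h]⟩
  rw [← Set.inter_eq_right, Set.eq_of_subset_of_ncard_le Set.inter_subset_right h hs]

namespace SimpleGraph

variable {V : Type*} {G : SimpleGraph V} {k : ℕ} {S : Set V}

theorem subset_insert_neighborSet_iff {x : V} :
    S ⊆ insert x (G.neighborSet x) ↔ ∀ v ∈ S, v ≠ x → G.Adj x v := by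
  refine forall₂_congr fun v _ => ?_
  rw [Set.mem_insert_iff, mem_neighborSet, or_iff_not_imp_left]

theorem IsKRDS.le_ncard [Finite V] (hS : G.IsKRDS k S) (x : V) : k ≤ S.ncard :=
  (hS.1 x).trans (Set.ncard_inter_le_ncard_right _ _)

theorem isKRDS_iff_of_ncard_eq [Finite V] (hS : S.ncard = k) :
    G.IsKRDS k S ↔
      (∀ x, ∀ v ∈ S, v ≠ x → G.Adj x v) ∧
        ∀ x ∉ S, k ≤ (G.neighborSet x \ S).ncard := by
  simp only [IsKRDS, ← hS, Set.ncard_le_ncard_inter_iff S.toFinite, subset_insert_neighborSet_iff]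

theorem kRDNum_eq_self_iff [Fintype V] :
    G.kRDNum k = k ↔ ∃ S : Set V, G.IsKRDS k S ∧ S.ncard = k := by
  constructor
  · intro h
    obtain rfl | hk := k.eq_zero_or_pos
    · exact ⟨∅, ⟨fun _ => Nat.zero_le _, fun _ _ => Nat.zero_le _⟩, Set.ncard_empty V⟩
    -- `sInf ∅ = 0`, so a positive value of `kRDNum` is attained.
    · have hmem := Nat.sInf_mem (Nat.nonempty_of_pos_sInf (h.symm ▸ hk : 0 < G.kRDNum k))
      rwa [← kRDNum, h] at hmem
  · rintro ⟨S, hS, hcard⟩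
    refine IsLeast.csInf_eq ⟨⟨S, hS, hcard⟩, ?_⟩
    rintro _ ⟨T, hT, rfl⟩
    obtain rfl | hk := k.eq_zero_or_pos
    · exact Nat.zero_le _
    · obtain ⟨x, -⟩ := Set.nonempty_of_ncard_ne_zero (hcard ▸ hk.ne')
      exact hT.le_ncard x

end SimpleGraph

theorem kRDNum_eq_k_iff_general {V : Type*} [Fintype V] (G : SimpleGraph V) (k : ℕ) :
    G.kRDNum k = k ↔
      (Nonempty (G ≃g (⊤ : SimpleGraph (Fin k)))) ∨
      ∃ S : Finset V, S.card = k ∧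
        (∀ u ∈ S, ∀ v ∈ S, u ≠ v → G.Adj u v) ∧
        (∀ u : V, u ∉ S → ∀ v ∈ S, G.Adj u v) ∧
        (∀ u : V, u ∉ S → k ≤ (G.neighborSet u \ ↑S).ncard) := by
  classical
  rw [SimpleGraph.kRDNum_eq_self_iff]
  constructor
  · rintro ⟨S, hS, hcard⟩
    obtain ⟨hjoin, hout⟩ := (SimpleGraph.isKRDS_iff_of_ncard_eq hcard).1 hS
    refine Or.inr ⟨S.toFinset, by rwa [Set.ncard_eq_toFinset_card'] at hcard,
      fun u _ v hv huv => hjoin u v (by simpa using hv) huv.symm,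
      fun u hu v hv => hjoin u v (by simpa using hv) ?_, by simpa using hout⟩
    rintro rfl
    exact hu hv
  · rintro (he | ⟨S, hcard, hclique, hjoin, hout⟩)
    · obtain ⟨e⟩ := he
      have hcard : (Set.univ : Set V).ncard = k := by
        simpa using Nat.card_congr e.toEquiv
      refine ⟨Set.univ,
        (SimpleGraph.isKRDS_iff_of_ncard_eq hcard).2 ⟨fun x v _ hvx => ?_, by simp⟩, hcard⟩
      rw [← e.map_adj_iff, SimpleGraph.top_adj, e.injective.ne_iff]
      exact hvx.symm
    · have hcard' : (S : Set V).ncard = k := by simpa using hcard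
      refine ⟨S, (SimpleGraph.isKRDS_iff_of_ncard_eq hcard').2
        ⟨fun x v hv hvx => ?_, by simpa using hout⟩, hcard'⟩
      by_cases hx : x ∈ S
      · exact hclique x hx v hv (Ne.symm hvx)
      · exact hjoin x hx v hv

/-- γ×k^r(G) = k iff G is the complete graph K_k, or G is obtained by joining every
vertex of a graph F with δ(F) ≥ k to every vertex of a complete graph on k vertices. -/
theorem kRDNum_eq_k_iff {V : Type*} [Fintype V] (G : SimpleGraph V) (k : ℕ) (hk : 1 ≤ k)
    (hdeg : ∀ v : V, k - 1 ≤ (G.neighborSet v).ncard) :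
    G.kRDNum k = k ↔
      (Nonempty (G ≃g (⊤ : SimpleGraph (Fin k)))) ∨
      ∃ S : Finset V, S.card = k ∧
        (∀ u ∈ S, ∀ v ∈ S, u ≠ v → G.Adj u v) ∧
        (∀ u : V, u ∉ S → ∀ v ∈ S, G.Adj u v) ∧
        (∀ u : V, u ∉ S → k ≤ (G.neighborSet u \ ↑S).ncard) :=
  kRDNum_eq_k_iff_general G k
end

section
/- Let k ≥ 1 be an integer and let G be a graph of order n with minimum degree δ(G) ≥ k − 1. Then γ×k^r(G) · d×k^r(G) ≤ n. Moreover, if γ×k^r(G) · d×k^r(G) = n, then for every partition {V_1, …, V_d} of V(G) into d = d×k^r(G) k-tuple restrained dominating sets, each class V_i has cardinality γ×k^r(G). -/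
/-- The `k`-tuple restrained domatic number of `G`: the maximum number of classes of a
partition of the vertex set all of whose classes are `k`-tuple restrained dominating
sets (0 if no such partition exists). -/
noncomputable def SimpleGraph.kRDomatic {V : Type*} [Fintype V] (G : SimpleGraph V) (k : ℕ) : ℕ :=
  sSup {d | ∃ f : V → Fin d, ∀ i : Fin d, G.IsKRDS k (f ⁻¹' {i})}

/-!
Every class of a partition into `d` k-tuple restrained dominating sets has at least
γ×k^r(G) vertices, and the class sizes add up to `n`; hence γ×k^r(G) · d ≤ n, with equality
only if every class has exactly γ×k^r(G) vertices. A maximum partition exists unless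
d×k^r(G) = 0, in which case there is nothing to prove.
-/

/-- In `ℕ`, `sSup s = 0` both for `s = ∅` and for unbounded `s`, so a nonzero supremum
is attained. -/
theorem Nat.sSup_mem_of_ne_zero {s : Set ℕ} (h : sSup s ≠ 0) : sSup s ∈ s := by
  obtain rfl | hne := s.eq_empty_or_nonempty
  · exact absurd csSup_empty h
  by_cases hbdd : BddAbove s
  · exact Nat.sSup_mem hne hbdd
  · exact absurd ((csSup_of_not_bddAbove hbdd).trans csSup_empty) h

theorem Fintype.sum_ncard_preimage_singleton {α ι : Type*} [Fintype α] [Fintype ι]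
    (f : α → ι) : ∑ i, (f ⁻¹' {i}).ncard = Fintype.card α := by
  classical
  rw [← Finset.card_univ, Finset.card_eq_sum_card_fiberwise (f := f) (t := Finset.univ) (by simp)]
  simp [Set.ncard_eq_toFinset_card']

namespace SimpleGraph

variable {V : Type*} [Fintype V] {G : SimpleGraph V} {k : ℕ}

theorem kRDNum_le_ncard {S : Set V} (hS : G.IsKRDS k S) : G.kRDNum k ≤ S.ncard :=
  Nat.sInf_le ⟨S, hS, rfl⟩

theorem exists_kRDS_partition_of_kRDomatic_ne_zero (h : G.kRDomatic k ≠ 0) :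
    ∃ f : V → Fin (G.kRDomatic k), ∀ i, G.IsKRDS k (f ⁻¹' {i}) :=
  Nat.sSup_mem_of_ne_zero h

section Partition

variable {d : ℕ} {f : V → Fin d}

theorem kRDNum_mul_le_card (hf : ∀ i, G.IsKRDS k (f ⁻¹' {i})) :
    G.kRDNum k * d ≤ Fintype.card V := by
  calc G.kRDNum k * d = ∑ _i : Fin d, G.kRDNum k := by simp [mul_comm]
    _ ≤ ∑ i, (f ⁻¹' {i}).ncard := Finset.sum_le_sum fun i _ ↦ kRDNum_le_ncard (hf i)
    _ = Fintype.card V := Fintype.sum_ncard_preimage_singleton f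

theorem ncard_eq_kRDNum_of_kRDNum_mul_eq_card (hf : ∀ i, G.IsKRDS k (f ⁻¹' {i}))
    (h : G.kRDNum k * d = Fintype.card V) (i : Fin d) : (f ⁻¹' {i}).ncard = G.kRDNum k := by
  have hsum : ∑ _j : Fin d, G.kRDNum k = ∑ j, (f ⁻¹' {j}).ncard := by
    simp [Fintype.sum_ncard_preimage_singleton, ← h, mul_comm]
  exact ((Finset.sum_eq_sum_iff_of_le fun j _ ↦ kRDNum_le_ncard (hf j)).mp hsum i
    (Finset.mem_univ i)).symm

end Partition

end SimpleGraph

theorem kRDNum_mul_kRDomatic_le_general {V : Type*} [Fintype V] (G : SimpleGraph V) (k : ℕ) :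
    G.kRDNum k * G.kRDomatic k ≤ Fintype.card V ∧
    (G.kRDNum k * G.kRDomatic k = Fintype.card V →
      ∀ f : V → Fin (G.kRDomatic k), (∀ i, G.IsKRDS k (f ⁻¹' {i})) →
        ∀ i, (f ⁻¹' {i} : Set V).ncard = G.kRDNum k) := by
  refine ⟨?_, fun h f hf ↦ SimpleGraph.ncard_eq_kRDNum_of_kRDNum_mul_eq_card hf h⟩
  by_cases hd : G.kRDomatic k = 0
  · simp [hd]
  · obtain ⟨f, hf⟩ := SimpleGraph.exists_kRDS_partition_of_kRDomatic_ne_zero hd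
    exact SimpleGraph.kRDNum_mul_le_card hf

/-- γ×k^r(G) · d×k^r(G) ≤ n; moreover, in case of equality, every class of every
partition of the vertex set into d×k^r(G) k-tuple restrained dominating sets has
cardinality γ×k^r(G). -/
theorem kRDNum_mul_kRDomatic_le {V : Type*} [Fintype V] (G : SimpleGraph V) (k : ℕ)
    (hk : 1 ≤ k) (hdeg : ∀ v : V, k - 1 ≤ (G.neighborSet v).ncard) :
    G.kRDNum k * G.kRDomatic k ≤ Fintype.card V ∧
    (G.kRDNum k * G.kRDomatic k = Fintype.card V →
      ∀ f : V → Fin (G.kRDomatic k), (∀ i, G.IsKRDS k (f ⁻¹' {i})) →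
        ∀ i, (f ⁻¹' {i} : Set V).ncard = G.kRDNum k) :=
  kRDNum_mul_kRDomatic_le_general G k
end

section
/- Let G be a graph. If it is not the case that d(G) = 2 and d_t(G) = 1, then d^r(G) = d(G). -/
/-- `S` is a `k`-tuple dominating set of `G`: every vertex has at least `k` vertices
of `S` in its closed neighborhood. -/
def SimpleGraph.IsKDS {V : Type*} (G : SimpleGraph V) (k : ℕ) (S : Set V) : Prop :=
  ∀ x : V, k ≤ ((insert x (G.neighborSet x)) ∩ S).ncard

/-- `S` is a `k`-tuple total dominating set of `G`: every vertex has at least `k`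
neighbors in `S`. -/
def SimpleGraph.IsKTDS {V : Type*} (G : SimpleGraph V) (k : ℕ) (S : Set V) : Prop :=
  ∀ x : V, k ≤ (G.neighborSet x ∩ S).ncard

/-- The `k`-tuple domatic number of `G` (0 if no partition into kDSs exists). -/
noncomputable def SimpleGraph.kDomatic {V : Type*} [Fintype V] (G : SimpleGraph V) (k : ℕ) : ℕ :=
  sSup {d | ∃ f : V → Fin d, ∀ i : Fin d, G.IsKDS k (f ⁻¹' {i})}

/-- The `k`-tuple total domatic number of `G` (0 if no partition into kTDSs exists). -/
noncomputable def SimpleGraph.kTDomatic {V : Type*} [Fintype V] (G : SimpleGraph V) (k : ℕ) : ℕ :=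
  sSup {d | ∃ f : V → Fin d, ∀ i : Fin d, G.IsKTDS k (f ⁻¹' {i})}

theorem Set.one_le_ncard_iff {α : Type*} [Finite α] {s : Set α} : 1 ≤ s.ncard ↔ s.Nonempty := by
  rw [Nat.one_le_iff_ne_zero, ← Nat.pos_iff_ne_zero, Set.ncard_pos]

/-- The numbers `d` for which `V` splits into `d` classes (some possibly empty), each satisfying
`P`. -/
def partitionSizes {V : Type*} (P : Set V → Prop) : Set ℕ :=
  {d | ∃ f : V → Fin d, ∀ i : Fin d, P (f ⁻¹' {i})}

section partitionSizes

variable {V : Type*} {P Q : Set V → Prop}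

theorem partitionSizes_mono (h : ∀ S, P S → Q S) : partitionSizes P ⊆ partitionSizes Q :=
  fun _ ⟨f, hf⟩ => ⟨f, fun i => h _ (hf i)⟩

theorem one_mem_partitionSizes (h : P Set.univ) : 1 ∈ partitionSizes P :=
  ⟨fun _ => 0, fun i => by simpa [Subsingleton.elim i 0] using h⟩

theorem two_mem_partitionSizes {S : Set V} (h : P S) (hc : P Sᶜ) : 2 ∈ partitionSizes P := by
  classical
  refine ⟨fun x => if x ∈ S then 0 else 1, fun i => ?_⟩
  fin_cases i
  · convert h using 1
    ext x
    by_cases hx : x ∈ S <;> simp [hx]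
  · convert hc using 1
    ext x
    by_cases hx : x ∈ S <;> simp [hx]

theorem bddAbove_partitionSizes [Finite V] (hP : ∀ S, P S → S.Nonempty) :
    BddAbove (partitionSizes P) := by
  refine ⟨Nat.card V, fun d ⟨f, hf⟩ => ?_⟩
  have hsurj : Function.Surjective f := fun i => (hP _ (hf i)).imp fun _ hx => hx
  simpa using Nat.card_le_card_of_surjective f hsurj

end partitionSizes

namespace SimpleGraph

variable {V : Type*} (G : SimpleGraph V)

theorem kDomatic_eq [Fintype V] (k : ℕ) : G.kDomatic k = sSup (partitionSizes (G.IsKDS k)) := rfl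

theorem kRDomatic_eq [Fintype V] (k : ℕ) :
    G.kRDomatic k = sSup (partitionSizes (G.IsKRDS k)) := rfl

variable {G}

theorem IsKRDS.isKDS {k : ℕ} {S : Set V} (h : G.IsKRDS k S) : G.IsKDS k S := h.1

theorem IsKTDS.mono [Finite V] {k : ℕ} {S T : Set V} (h : G.IsKTDS k S) (hST : S ⊆ T) :
    G.IsKTDS k T :=
  fun x => (h x).trans (Set.ncard_le_ncard (Set.inter_subset_inter_right _ hST))

theorem IsKTDS.isKDS [Finite V] {k : ℕ} {S : Set V} (h : G.IsKTDS k S) : G.IsKDS k S :=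
  fun x => (h x).trans
    (Set.ncard_le_ncard (Set.inter_subset_inter_left _ (Set.subset_insert _ _)))

theorem IsKTDS.isKRDS_of_compl [Finite V] {k : ℕ} {S : Set V} (h : G.IsKTDS k S)
    (hc : G.IsKTDS k Sᶜ) : G.IsKRDS k S :=
  ⟨h.isKDS, fun x _ => by simpa [Set.sdiff_eq] using hc x⟩

theorem isKDS_one_iff [Finite V] {S : Set V} :
    G.IsKDS 1 S ↔ ∀ x, x ∈ S ∨ ∃ y ∈ S, G.Adj x y := by
  simp only [IsKDS, Set.one_le_ncard_iff, Set.Nonempty, Set.mem_inter_iff, Set.mem_insert_iff,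
    mem_neighborSet, or_and_right, exists_or, exists_eq_left]
  simp only [and_comm]

theorem isKTDS_one_iff [Finite V] {S : Set V} :
    G.IsKTDS 1 S ↔ ∀ x, ∃ y ∈ S, G.Adj x y := by
  simp only [IsKTDS, Set.one_le_ncard_iff, Set.Nonempty,
    Set.mem_inter_iff, mem_neighborSet, and_comm]

theorem isKRDS_one_iff_s17 [Finite V] {S : Set V} :
    G.IsKRDS 1 S ↔ G.IsKDS 1 S ∧ ∀ x ∉ S, ∃ y ∉ S, G.Adj x y := by
  rw [IsKRDS, IsKDS]
  simp only [Set.one_le_ncard_iff, Set.Nonempty,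
    Set.mem_sdiff, mem_neighborSet, and_comm]

theorem IsKDS.nonempty [Nonempty V] {S : Set V} (h : G.IsKDS 1 S) : S.Nonempty := by
  obtain ⟨x⟩ := ‹Nonempty V›
  obtain ⟨y, hy⟩ := Set.nonempty_of_ncard_ne_zero (Nat.one_le_iff_ne_zero.mp (h x))
  exact ⟨y, hy.2⟩

theorem IsKDS.exists_adj_mem [Finite V] {S : Set V} (h : G.IsKDS 1 S) {x : V} (hx : x ∉ S) :
    ∃ y ∈ S, G.Adj x y :=
  (isKDS_one_iff.mp h x).resolve_left hx

theorem isKDS_one_univ [Finite V] : G.IsKDS 1 Set.univ :=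
  isKDS_one_iff.mpr fun _ => Or.inl trivial

section Partition

variable [Finite V] {d : ℕ} {f : V → Fin d}

theorem exists_adj_of_isKDS_partition (hd : 2 ≤ d) (hf : ∀ j, G.IsKDS 1 (f ⁻¹' {j})) (x : V) :
    ∃ y, G.Adj x y := by
  have : Nontrivial (Fin d) := Fin.nontrivial_iff_two_le.mpr hd
  obtain ⟨j, hj⟩ := exists_ne (f x)
  obtain ⟨y, -, hxy⟩ := (hf j).exists_adj_mem (x := x) hj.symm
  exact ⟨y, hxy⟩

theorem isKRDS_of_isKDS_partition (hd : d ≠ 2) (hf : ∀ j, G.IsKDS 1 (f ⁻¹' {j})) (i : Fin d) :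
    G.IsKRDS 1 (f ⁻¹' {i}) := by
  refine isKRDS_one_iff_s17.mpr ⟨hf i, fun x (hxi : f x ≠ i) => ?_⟩
  have : 2 ≤ d := Fin.nontrivial_iff_two_le.mp ⟨⟨_, _, hxi⟩⟩
  obtain ⟨k, hki, hkx⟩ := Fin.exists_ne_and_ne_of_two_lt i (f x) (by omega)
  obtain ⟨y, hyk : f y = k, hxy⟩ := (hf k).exists_adj_mem (x := x) hkx.symm
  exact ⟨y, fun hyi : f y = i => hki (hyk.symm.trans hyi), hxy⟩

theorem two_mem_partitionSizes_isKRDS {k : ℕ} (hd : 2 ≤ d) (hf : ∀ j, G.IsKTDS k (f ⁻¹' {j})) :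
    2 ∈ partitionSizes (G.IsKRDS k) := by
  let S := f ⁻¹' {⟨0, by omega⟩}
  have hS : G.IsKTDS k S := hf _
  have hSc : G.IsKTDS k Sᶜ := (hf ⟨1, hd⟩).mono fun y (hy : f y = _) (hy' : f y = _) => by
    simp [hy] at hy'
  exact two_mem_partitionSizes (hS.isKRDS_of_compl hSc)
    (hSc.isKRDS_of_compl (by rwa [compl_compl]))

end Partition

section Domatic

variable [Fintype V] [Nonempty V]

theorem bddAbove_partitionSizes_isKDS : BddAbove (partitionSizes (G.IsKDS 1)) :=
  bddAbove_partitionSizes fun _ h => h.nonempty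

theorem kDomatic_mem : G.kDomatic 1 ∈ partitionSizes (G.IsKDS 1) :=
  Nat.sSup_mem ⟨1, one_mem_partitionSizes isKDS_one_univ⟩ bddAbove_partitionSizes_isKDS

theorem kTDomatic_mem_and_one_le (hG : ∀ x, ∃ y, G.Adj x y) :
    G.kTDomatic 1 ∈ partitionSizes (G.IsKTDS 1) ∧ 1 ≤ G.kTDomatic 1 := by
  have h1 : 1 ∈ partitionSizes (G.IsKTDS 1) :=
    one_mem_partitionSizes (isKTDS_one_iff.mpr fun x => (hG x).imp fun _ hxy => ⟨trivial, hxy⟩)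
  have hbdd := (bddAbove_partitionSizes_isKDS (G := G)).mono
    (partitionSizes_mono fun _ => IsKTDS.isKDS)
  exact ⟨Nat.sSup_mem ⟨1, h1⟩ hbdd, le_csSup hbdd h1⟩

end Domatic

end SimpleGraph

/-- If it is not the case that d(G) = 2 and d_t(G) = 1, then d^r(G) = d(G). -/
theorem rDomatic_eq_domatic {V : Type*} [Fintype V] (G : SimpleGraph V)
    (h : ¬ (G.kDomatic 1 = 2 ∧ G.kTDomatic 1 = 1)) :
    G.kRDomatic 1 = G.kDomatic 1 := by
  rcases isEmpty_or_nonempty V with _ | _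
  · have hiff : G.IsKRDS 1 = G.IsKDS 1 :=
      funext fun _ => propext ⟨SimpleGraph.IsKRDS.isKDS, (⟨·, isEmptyElim⟩)⟩
    rw [G.kRDomatic_eq, G.kDomatic_eq, hiff]
  have hB := G.bddAbove_partitionSizes_isKDS
  have hsub : partitionSizes (G.IsKRDS 1) ⊆ partitionSizes (G.IsKDS 1) :=
    partitionSizes_mono fun _ => SimpleGraph.IsKRDS.isKDS
  suffices hd : G.kDomatic 1 ∈ partitionSizes (G.IsKRDS 1) from
    le_antisymm (csSup_le_csSup hB ⟨_, hd⟩ hsub) (le_csSup (hB.mono hsub) hd)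
  obtain ⟨f, hf⟩ := G.kDomatic_mem
  by_cases hd : G.kDomatic 1 = 2
  · obtain ⟨⟨g, hg⟩, hdt⟩ :=
      G.kTDomatic_mem_and_one_le (G.exists_adj_of_isKDS_partition hd.ge hf)
    rw [hd]
    exact G.two_mem_partitionSizes_isKRDS (by omega) hg
  · exact ⟨f, G.isKRDS_of_isKDS_partition hd hf⟩
end

section
/- Let k ≥ 2 be an integer and let G be a graph with minimum degree δ(G) ≥ k − 1. If V(G) can be partitioned into at least three k-tuple dominating sets of G, at least one of which has minimum cardinality γ×k(G), then γ×k^r(G) = γ×k(G). -/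
/-- The `k`-tuple domination number of `G`. -/
noncomputable def SimpleGraph.kDNum {V : Type*} [Fintype V] (G : SimpleGraph V) (k : ℕ) : ℕ :=
  sInf {m | ∃ S : Set V, G.IsKDS k S ∧ S.ncard = m}

namespace SimpleGraph

variable {V : Type*} {G : SimpleGraph V} {k : ℕ}

theorem IsKDS.le_ncard_neighborSet_diff [Finite V] {S T : Set V} {x : V} (hT : G.IsKDS k T)
    (hxT : x ∉ T) (hST : Disjoint S T) : k ≤ (G.neighborSet x \ S).ncard := by
  have hsub : insert x (G.neighborSet x) ∩ T ⊆ G.neighborSet x \ S := by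
    rintro y ⟨rfl | hyx, hyT⟩
    · exact absurd hyT hxT
    · exact ⟨hyx, hST.notMem_of_mem_right hyT⟩
  exact (hT x).trans (Set.ncard_le_ncard hsub)

theorem isKRDS_fiber_of_three_le [Finite V] {d : ℕ} (hd : 3 ≤ d) {f : V → Fin d}
    (hf : ∀ i, G.IsKDS k (f ⁻¹' {i})) (i : Fin d) : G.IsKRDS k (f ⁻¹' {i}) := by
  refine ⟨hf i, fun x hx => ?_⟩
  obtain ⟨l, hli, hlx⟩ := Fin.exists_ne_and_ne_of_two_lt i (f x) (by omega)
  refine (hf l).le_ncard_neighborSet_diff (Ne.symm hlx) ?_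
  exact Set.disjoint_left.mpr fun y (hyi : f y = i) (hyl : f y = l) => hli (hyl ▸ hyi)

theorem kRDNum_eq_kDNum_of_isKRDS [Fintype V] {S : Set V} (hS : G.IsKRDS k S)
    (hcard : S.ncard = G.kDNum k) : G.kRDNum k = G.kDNum k := by
  obtain ⟨T, hT, hTcard⟩ := Nat.sInf_mem (⟨S.ncard, S, hS, rfl⟩ :
    {m | ∃ T : Set V, G.IsKRDS k T ∧ T.ncard = m}.Nonempty)
  exact le_antisymm (Nat.sInf_le ⟨S, hS, hcard⟩) (Nat.sInf_le ⟨T, hT.1, hTcard⟩)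

end SimpleGraph

theorem kRDNum_eq_kDNum_general {V : Type*} [Fintype V] (G : SimpleGraph V) (k : ℕ)
    (h : ∃ d : ℕ, 3 ≤ d ∧ ∃ f : V → Fin d,
      (∀ i : Fin d, G.IsKDS k (f ⁻¹' {i})) ∧
      ∃ i : Fin d, (f ⁻¹' {i} : Set V).ncard = G.kDNum k) :
    G.kRDNum k = G.kDNum k := by
  obtain ⟨d, hd, f, hf, i, hmin⟩ := h
  exact G.kRDNum_eq_kDNum_of_isKRDS (G.isKRDS_fiber_of_three_le hd hf i) hmin

/-- If the vertex set of G can be partitioned into at least three k-tuple dominating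
sets, one of which has minimum cardinality γ×k(G), then γ×k^r(G) = γ×k(G). -/
theorem kRDNum_eq_kDNum {V : Type*} [Fintype V] (G : SimpleGraph V) (k : ℕ)
    (hk : 2 ≤ k) (hdeg : ∀ v : V, k - 1 ≤ (G.neighborSet v).ncard)
    (h : ∃ d : ℕ, 3 ≤ d ∧ ∃ f : V → Fin d,
      (∀ i : Fin d, G.IsKDS k (f ⁻¹' {i})) ∧
      ∃ i : Fin d, (f ⁻¹' {i} : Set V).ncard = G.kDNum k) :
    G.kRDNum k = G.kDNum k :=
  kRDNum_eq_kDNum_general G k h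
end
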